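/- The configuration space C^2(L) of the lollipop graph is path-connected. -/
import Mathlib


open Set

/-- The lollipop graph `L` realized in the plane: the unit circle together with the
segment from `(1,0)` to `(2,0)` attached at the point `(1,0)`. -/
abbrev L : Set (ℝ × ℝ) :=
  {p | p.1 ^ 2 + p.2 ^ 2 = 1} ∪ segment ℝ ((1:ℝ), (0:ℝ)) ((2:ℝ), (0:ℝ))

/-- The ordered configuration space of two distinct points on the lollipop graph. -/
abbrev Conf2L : Type :=
  {p : (ℝ × ℝ) × (ℝ × ℝ) // p.1 ∈ L ∧ p.2 ∈ L ∧ p.1 ≠ p.2}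


namespace Conf2LAux

open Real

abbrev S : Set ((ℝ × ℝ) × (ℝ × ℝ)) := {p | p.1 ∈ L ∧ p.2 ∈ L ∧ p.1 ≠ p.2}

noncomputable def c (θ : ℝ) : ℝ × ℝ := (Real.cos θ, Real.sin θ)

lemma c_mem (θ : ℝ) : c θ ∈ L := Or.inl (by simp [c, Real.cos_sq_add_sin_sq])

lemma seg_mem {t : ℝ} (h1 : 1 ≤ t) (h2 : t ≤ 2) : ((t, (0:ℝ)) : ℝ × ℝ) ∈ L := by
  refine Or.inr ⟨2 - t, t - 1, by linarith, by linarith, by ring, ?_⟩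
  simp [Prod.ext_iff, Prod.smul_def]; ring

lemma seg_char {p : ℝ × ℝ} (h : p ∈ segment ℝ ((1:ℝ),(0:ℝ)) ((2:ℝ),(0:ℝ))) :
    ∃ t, 1 ≤ t ∧ t ≤ 2 ∧ p = (t, 0) := by
  obtain ⟨a, b, ha, hb, hab, heq⟩ := h
  refine ⟨a + 2*b, by linarith, by linarith, ?_⟩
  rw [← heq]; simp [Prod.ext_iff, Prod.smul_def]; ring

lemma circle_char {p : ℝ × ℝ} (h : p.1^2 + p.2^2 = 1) : ∃ θ, p = c θ := by
  have hx1 : -1 ≤ p.1 := by nlinarith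
  have hx2 : p.1 ≤ 1 := by nlinarith
  rcases le_or_gt 0 p.2 with hy | hy
  · refine ⟨Real.arccos p.1, ?_⟩
    have : Real.sin (Real.arccos p.1) = Real.sqrt (1 - p.1^2) := Real.sin_arccos p.1
    have h2 : Real.sqrt (1 - p.1^2) = |p.2| := by
      rw [show 1 - p.1^2 = p.2^2 by linarith, Real.sqrt_sq_eq_abs]
    simp [c, Prod.ext_iff, Real.cos_arccos hx1 hx2, this, h2, abs_of_nonneg hy]
  · refine ⟨-Real.arccos p.1, ?_⟩
    have h2 : Real.sqrt (1 - p.1^2) = |p.2| := by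
      rw [show 1 - p.1^2 = p.2^2 by linarith, Real.sqrt_sq_eq_abs]
    simp [c, Prod.ext_iff, Real.cos_arccos hx1 hx2, Real.sin_arccos, h2,
      abs_of_neg hy]

lemma joinedIn_of {X : Type*} [TopologicalSpace X] {s : Set X} {x y : X}
    (f : ℝ → X) (hf : Continuous f) (h0 : f 0 = x) (h1 : f 1 = y)
    (hS : ∀ t, 0 ≤ t → t ≤ 1 → f t ∈ s) : JoinedIn s x y := by
  refine ⟨⟨⟨fun t => f t, hf.comp continuous_subtype_val⟩, ?_, ?_⟩, fun t => hS t t.2.1 t.2.2⟩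
  · simp [h0]
  · simp [h1]

lemma c_inj_shift {x y t : ℝ} (h : c (x + t) = c (y + t)) : c x = c y := by
  have h1 : Real.cos (x+t) = Real.cos (y+t) := congrArg Prod.fst h
  have h2 : Real.sin (x+t) = Real.sin (y+t) := congrArg Prod.snd h
  have e1 : Real.cos x = Real.cos y := by
    have := Real.cos_sub (x+t) t
    have := Real.cos_sub (y+t) t
    simp only [add_sub_cancel_right] at *
    rw [‹Real.cos x = _›, ‹Real.cos y = _›, h1, h2]
  have e2 : Real.sin x = Real.sin y := by
    have := Real.sin_sub (x+t) t
    have := Real.sin_sub (y+t) t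
    simp only [add_sub_cancel_right] at *
    rw [‹Real.sin x = _›, ‹Real.sin y = _›, h1, h2]
  simp [c, e1, e2]

lemma c_eq_seg {θ v : ℝ} (h1 : 1 ≤ v) (h : c θ = (v, 0)) : v = 1 ∧ c θ = ((1:ℝ), (0:ℝ)) := by
  have hc : Real.cos θ = v := congrArg Prod.fst h
  have hs : Real.sin θ = 0 := congrArg Prod.snd h
  have := Real.cos_sq_add_sin_sq θ
  have hv : v = 1 := by nlinarith
  exact ⟨hv, by rw [h, hv]⟩

lemma c_ne_two (θ : ℝ) : c θ ≠ ((2:ℝ), (0:ℝ)) := by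
  intro h
  have := (c_eq_seg (by norm_num) h).1
  norm_num at this

lemma seg_val_mem {s s' u : ℝ} (hs : 1 ≤ s) (hs2 : s ≤ 2) (hs' : 1 ≤ s') (hs2' : s' ≤ 2)
    (hu : 0 ≤ u) (hu1 : u ≤ 1) : 1 ≤ (1-u)*s + u*s' ∧ (1-u)*s + u*s' ≤ 2 :=
  ⟨by nlinarith, by nlinarith⟩

lemma move_snd_seg {a : ℝ × ℝ} {s s' : ℝ} (ha : a ∈ L) (hs : 1 ≤ s) (hs2 : s ≤ 2)
    (hs' : 1 ≤ s') (hs2' : s' ≤ 2)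
    (hav : ∀ u, 0 ≤ u → u ≤ 1 → a ≠ ((1-u)*s + u*s', 0)) :
    JoinedIn S (a, (s, 0)) (a, (s', 0)) := by
  refine joinedIn_of (fun u => (a, ((1-u)*s + u*s', 0))) (by fun_prop) (by norm_num)
    (by norm_num) (fun u hu hu1 => ?_)
  obtain ⟨h1, h2⟩ := seg_val_mem hs hs2 hs' hs2' hu hu1
  exact ⟨ha, seg_mem h1 h2, hav u hu hu1⟩

lemma move_fst_seg {b : ℝ × ℝ} {s s' : ℝ} (hb : b ∈ L) (hs : 1 ≤ s) (hs2 : s ≤ 2)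
    (hs' : 1 ≤ s') (hs2' : s' ≤ 2)
    (hav : ∀ u, 0 ≤ u → u ≤ 1 → ((((1-u)*s + u*s' : ℝ), (0:ℝ)) : ℝ × ℝ) ≠ b) :
    JoinedIn S ((s, 0), b) ((s', 0), b) := by
  refine joinedIn_of (fun u => (((1-u)*s + u*s', 0), b)) (by fun_prop) (by norm_num)
    (by norm_num) (fun u hu hu1 => ?_)
  obtain ⟨h1, h2⟩ := seg_val_mem hs hs2 hs' hs2' hu hu1
  exact ⟨seg_mem h1 h2, hb, hav u hu hu1⟩

lemma move_snd_arc {a : ℝ × ℝ} {α β : ℝ} (ha : a ∈ L)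
    (hav : ∀ u, 0 ≤ u → u ≤ 1 → a ≠ c ((1-u)*α + u*β)) :
    JoinedIn S (a, c α) (a, c β) := by
  refine joinedIn_of (fun u => (a, c ((1-u)*α + u*β))) ?_ (by norm_num) (by norm_num)
    (fun u hu hu1 => ⟨ha, c_mem _, hav u hu hu1⟩)
  unfold c; fun_prop

lemma move_fst_arc {b : ℝ × ℝ} {α β : ℝ} (hb : b ∈ L)
    (hav : ∀ u, 0 ≤ u → u ≤ 1 → c ((1-u)*α + u*β) ≠ b) :
    JoinedIn S (c α, b) (c β, b) := by
  refine joinedIn_of (fun u => (c ((1-u)*α + u*β), b)) ?_ (by norm_num) (by norm_num)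
    (fun u hu hu1 => ⟨c_mem _, hb, hav u hu hu1⟩)
  unfold c; fun_prop

lemma rotate_both {α β δ : ℝ} (h : c α ≠ c β) :
    JoinedIn S (c α, c β) (c (α + δ), c (β + δ)) := by
  refine joinedIn_of (fun u => (c (α + u*δ), c (β + u*δ))) ?_ (by norm_num) (by norm_num)
    (fun u hu hu1 => ⟨c_mem _, c_mem _, fun he => h (c_inj_shift he)⟩)
  unfold c; fun_prop

lemma hc0 : c 0 = ((1:ℝ), (0:ℝ)) := by simp [c]

lemma tail_arc (α : ℝ) : JoinedIn S (c α, ((2:ℝ), (0:ℝ))) (c π, ((2:ℝ), (0:ℝ))) :=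
  move_fst_arc (seg_mem (by norm_num) (by norm_num)) (fun u _ _ => c_ne_two _)

lemma tail1 : JoinedIn S (c 0, c (-(π/2))) (c π, ((2:ℝ), (0:ℝ))) := by
  have step4 : JoinedIn S (c 0, c (-(π/2))) (c π, c (-(π/2))) := by
    refine move_fst_arc (c_mem _) (fun u hu hu1 he => ?_)
    have h2 : Real.sin ((1-u)*0 + u*π) = Real.sin (-(π/2)) := congrArg Prod.snd he
    rw [Real.sin_neg, Real.sin_pi_div_two] at h2
    have : (0:ℝ) ≤ Real.sin ((1-u)*0 + u*π) :=
      Real.sin_nonneg_of_nonneg_of_le_pi (by nlinarith [Real.pi_pos]) (by nlinarith [Real.pi_pos])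
    linarith
  have step5 : JoinedIn S (c π, c (-(π/2))) (c π, c 0) := by
    refine move_snd_arc (c_mem _) (fun u hu hu1 he => ?_)
    have h1 : Real.cos π = Real.cos ((1-u)*(-(π/2)) + u*0) := congrArg Prod.fst he
    rw [Real.cos_pi] at h1
    have : (0:ℝ) ≤ Real.cos ((1-u)*(-(π/2)) + u*0) := by
      apply Real.cos_nonneg_of_mem_Icc
      constructor <;> [nlinarith [Real.pi_pos]; nlinarith [Real.pi_pos]]
    linarith
  have step6 : JoinedIn S (c π, ((1:ℝ), (0:ℝ))) (c π, ((2:ℝ), (0:ℝ))) := by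
    refine move_snd_seg (c_mem _) le_rfl (by norm_num) (by norm_num) le_rfl
      (fun u hu hu1 he => ?_)
    have h1 : Real.cos π = (1-u)*1 + u*2 := congrArg Prod.fst he
    rw [Real.cos_pi] at h1
    nlinarith
  rw [hc0] at step5
  exact (step4.trans step5).trans step6

lemma joined_to_base (p : (ℝ × ℝ) × (ℝ × ℝ)) (hp : p ∈ S) :
    JoinedIn S p (c π, ((2:ℝ), (0:ℝ))) := by
  obtain ⟨a, b⟩ := p
  obtain ⟨ha, hb, hne⟩ := hp
  simp only at ha hb hne
  rcases ha with hac | has <;> rcases hb with hbc | hbs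
  · -- circle, circle
    obtain ⟨α, rfl⟩ := circle_char hac
    obtain ⟨β, rfl⟩ := circle_char hbc
    have step1 : JoinedIn S (c α, c β) (c (α - β), c 0) := by
      have := rotate_both (δ := -β) hne
      simpa [← sub_eq_add_neg] using this
    have hne2 : c (α - β) ≠ ((1:ℝ), (0:ℝ)) := by
      rw [← hc0]
      intro he
      apply hne
      refine c_inj_shift (t := -β) ?_
      have e : c (α + -β) = c (α - β) := by rw [← sub_eq_add_neg]
      rw [e, he, show β + -β = 0 by ring]
    have step2 : JoinedIn S (c (α - β), ((1:ℝ), (0:ℝ))) (c (α - β), ((2:ℝ), (0:ℝ))) := by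
      refine move_snd_seg (c_mem _) le_rfl (by norm_num) (by norm_num) le_rfl
        (fun u hu hu1 he => ?_)
      obtain ⟨hv1, hceq⟩ := c_eq_seg (by nlinarith) he
      exact hne2 (by rw [hceq])
    rw [hc0] at step1
    exact (step1.trans step2).trans (tail_arc _)
  · -- circle, segment
    obtain ⟨α, rfl⟩ := circle_char hac
    obtain ⟨s, hs1, hs2, rfl⟩ := seg_char hbs
    have step1 : JoinedIn S (c α, ((s:ℝ), (0:ℝ))) (c α, ((2:ℝ), (0:ℝ))) := by
      refine move_snd_seg (c_mem _) hs1 hs2 (by norm_num) (by norm_num)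
        (fun u hu hu1 he => ?_)
      obtain ⟨hv1, hceq⟩ := c_eq_seg (by nlinarith) he
      have hs1' : s = 1 := by nlinarith
      exact hne (by rw [hs1', hceq])
    exact step1.trans (tail_arc _)
  · -- segment, circle
    obtain ⟨s, hs1, hs2, rfl⟩ := seg_char has
    obtain ⟨β, rfl⟩ := circle_char hbc
    have step1 : JoinedIn S (((s:ℝ), (0:ℝ)), c β) (((2:ℝ), (0:ℝ)), c β) := by
      refine move_fst_seg (c_mem _) hs1 hs2 (by norm_num) (by norm_num)
        (fun u hu hu1 he => ?_)
      obtain ⟨hv1, hceq⟩ := c_eq_seg (by nlinarith) he.symm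
      have hs1' : s = 1 := by nlinarith
      exact hne (by rw [hs1', hceq])
    have step2 : JoinedIn S (((2:ℝ), (0:ℝ)), c β) (((2:ℝ), (0:ℝ)), c (-(π/2))) :=
      move_snd_arc (seg_mem (by norm_num) (by norm_num))
        (fun u _ _ he => c_ne_two _ he.symm)
    have step3 : JoinedIn S (((2:ℝ), (0:ℝ)), c (-(π/2))) (((1:ℝ), (0:ℝ)), c (-(π/2))) := by
      refine move_fst_seg (c_mem _) (by norm_num) (by norm_num) le_rfl (by norm_num)
        (fun u hu hu1 he => ?_)
      have h2 : (0:ℝ) = Real.sin (-(π/2)) := congrArg Prod.snd he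
      rw [Real.sin_neg, Real.sin_pi_div_two] at h2
      norm_num at h2
    have step4 : JoinedIn S (((1:ℝ), (0:ℝ)), c (-(π/2))) (c π, ((2:ℝ), (0:ℝ))) := by
      rw [← hc0]; exact tail1
    exact ((step1.trans step2).trans step3).trans step4
  · -- segment, segment
    obtain ⟨s, hs1, hs2, rfl⟩ := seg_char has
    obtain ⟨s', hs1', hs2', rfl⟩ := seg_char hbs
    have hss : s ≠ s' := fun h => hne (by rw [h])
    rcases lt_or_gt_of_ne hss with h | h
    · -- s < s' : move b to 2, a to 1, a around
      have step1 : JoinedIn S (((s:ℝ),(0:ℝ)), ((s':ℝ),(0:ℝ))) (((s:ℝ),(0:ℝ)), ((2:ℝ),(0:ℝ))) := by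
        refine move_snd_seg (seg_mem hs1 hs2) hs1' hs2' (by norm_num) (by norm_num)
          (fun u hu hu1 he => ?_)
        have h1 : s = (1-u)*s' + u*2 := congrArg Prod.fst he
        nlinarith
      have step2 : JoinedIn S (((s:ℝ),(0:ℝ)), ((2:ℝ),(0:ℝ))) (((1:ℝ),(0:ℝ)), ((2:ℝ),(0:ℝ))) := by
        refine move_fst_seg (seg_mem (by norm_num) (by norm_num)) hs1 hs2 le_rfl (by norm_num)
          (fun u hu hu1 he => ?_)
        have h1 : (1-u)*s + u*1 = 2 := congrArg Prod.fst he
        nlinarith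
      have step3 : JoinedIn S (((1:ℝ),(0:ℝ)), ((2:ℝ),(0:ℝ))) (c π, ((2:ℝ),(0:ℝ))) := by
        rw [← hc0]; exact tail_arc 0
      exact (step1.trans step2).trans step3
    · -- s' < s (so s > 1) : move b to 1 then to (0,-1), a to 1, then tail1
      have hsgt : 1 < s := lt_of_le_of_lt hs1' h
      have step1 : JoinedIn S (((s:ℝ),(0:ℝ)), ((s':ℝ),(0:ℝ))) (((s:ℝ),(0:ℝ)), ((1:ℝ),(0:ℝ))) := by
        refine move_snd_seg (seg_mem hs1 hs2) hs1' hs2' le_rfl (by norm_num)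
          (fun u hu hu1 he => ?_)
        have h1 : s = (1-u)*s' + u*1 := congrArg Prod.fst he
        nlinarith
      have step2 : JoinedIn S (((s:ℝ),(0:ℝ)), c 0) (((s:ℝ),(0:ℝ)), c (-(π/2))) := by
        refine move_snd_arc (seg_mem hs1 hs2) (fun u hu hu1 he => ?_)
        obtain ⟨hv1, hceq⟩ := c_eq_seg hs1 he.symm
        linarith
      have step3 : JoinedIn S (((s:ℝ),(0:ℝ)), c (-(π/2))) (((1:ℝ),(0:ℝ)), c (-(π/2))) := by
        refine move_fst_seg (c_mem _) hs1 hs2 le_rfl (by norm_num)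
          (fun u hu hu1 he => ?_)
        have h2 : (0:ℝ) = Real.sin (-(π/2)) := congrArg Prod.snd he
        rw [Real.sin_neg, Real.sin_pi_div_two] at h2
        norm_num at h2
      rw [hc0] at step2
      have step4 : JoinedIn S (((1:ℝ),(0:ℝ)), c (-(π/2))) (c π, ((2:ℝ),(0:ℝ))) := by
        rw [← hc0]; exact tail1
      exact ((step1.trans step2).trans step3).trans step4



end Conf2LAux

open Conf2LAux Real in
/-- The configuration space `C^2(L)` of two robots on the lollipop graph is
path-connected. -/
theorem conf2L_pathConnected : PathConnectedSpace Conf2L := by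
  have hS : IsPathConnected S := by
    refine ⟨(c π, ((2:ℝ), (0:ℝ))), ⟨c_mem π, seg_mem (by norm_num) (by norm_num), c_ne_two π⟩,
      fun {y} hy => (joined_to_base y hy).symm⟩
  exact isPathConnected_iff_pathConnectedSpace.mp hS
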